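/- Let S be an ordered semigroup satisfying axioms O1–O6, and let λ₁, λ₂, λ₃ be functionals on S. Then (λ₁ ∧ λ₂) + λ₃ = (λ₁ + λ₃) ∧ (λ₂ + λ₃), where ∧ denotes the greatest lower bound in F(S) and + is pointwise addition of functionals. -/

import Mathlib

open scoped ENNReal

/-- `CC s t` : `s` is (sequentially) compactly contained in `t`, written `s ≪ t`. -/
def CC {S : Type*} [AddCommMonoid S] [PartialOrder S] (s t : S) : Prop :=
  ∀ u : ℕ → S, Monotone u → ∀ x : S, IsLUB (Set.range u) x → t ≤ x → ∃ n, s ≤ u n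

/-- An ordered semigroup (positive, with translation invariant order) satisfying axioms O1-O5. -/
structure CuO5 (S : Type*) [AddCommMonoid S] [PartialOrder S] : Prop where
  addRightMono : ∀ {s t : S}, s ≤ t → ∀ r : S, s + r ≤ t + r
  zeroLe : ∀ s : S, 0 ≤ s
  O1 : ∀ u : ℕ → S, Monotone u → ∃ x : S, IsLUB (Set.range u) x
  O2 : ∀ s : S, ∃ u : ℕ → S, (∀ n, CC (u n) (u (n + 1))) ∧ IsLUB (Set.range u) s
  O3 : ∀ {s₁ t₁ s₂ t₂ : S}, CC s₁ t₁ → CC s₂ t₂ → CC (s₁ + s₂) (t₁ + t₂)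
  O4 : ∀ u v : ℕ → S, Monotone u → Monotone v → ∀ x y : S,
    IsLUB (Set.range u) x → IsLUB (Set.range v) y →
    IsLUB (Set.range fun n => u n + v n) (x + y)
  O5 : ∀ {s' s t : S}, CC s' s → s ≤ t → ∃ r : S, s' + r ≤ t ∧ t ≤ s + r

/-- Axioms O1-O6. -/
structure CuO6 (S : Type*) [AddCommMonoid S] [PartialOrder S] extends CuO5 S : Prop where
  O6 : ∀ {s r t : S}, s ≤ r + t → ∀ {s' : S}, CC s' s →
    ∃ r' t' : S, s' ≤ r' + t' ∧ r' ≤ r ∧ r' ≤ s ∧ t' ≤ t ∧ t' ≤ s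

/-- A functional on `S`: additive, order preserving, zero preserving map to `[0,∞]`
preserving suprema of increasing sequences. -/
structure IsFunctional {S : Type*} [AddCommMonoid S] [PartialOrder S] (l : S → ℝ≥0∞) : Prop where
  map_zero : l 0 = 0
  map_add : ∀ s t : S, l (s + t) = l s + l t
  mono : ∀ {s t : S}, s ≤ t → l s ≤ l t
  map_sup : ∀ u : ℕ → S, Monotone u → ∀ x : S, IsLUB (Set.range u) x → l x = ⨆ n, l (u n)

/-- Real multiplication on `S` : a map `(0,∞] × S → S` additive, order preserving and
sup-(of increasing sequences)-preserving in each variable, with `1 · s = s`.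
Scalars are elements of `ℝ≥0∞` required to be positive. -/
structure RealMul (S : Type*) [AddCommMonoid S] [PartialOrder S] where
  smul : ℝ≥0∞ → S → S
  add_left : ∀ {a b : ℝ≥0∞}, 0 < a → 0 < b → ∀ s : S, smul (a + b) s = smul a s + smul b s
  add_right : ∀ {a : ℝ≥0∞}, 0 < a → ∀ s t : S, smul a (s + t) = smul a s + smul a t
  mono_left : ∀ {a b : ℝ≥0∞}, 0 < a → a ≤ b → ∀ s : S, smul a s ≤ smul b s
  mono_right : ∀ {a : ℝ≥0∞}, 0 < a → ∀ {s t : S}, s ≤ t → smul a s ≤ smul a t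
  sup_left : ∀ u : ℕ → ℝ≥0∞, Monotone u → 0 < u 0 → ∀ s : S,
    IsLUB (Set.range fun n => smul (u n) s) (smul (⨆ n, u n) s)
  sup_right : ∀ {a : ℝ≥0∞}, 0 < a → ∀ u : ℕ → S, Monotone u → ∀ x : S,
    IsLUB (Set.range u) x → IsLUB (Set.range fun n => smul a (u n)) (smul a x)
  one_smul : ∀ s : S, smul 1 s = s

/-- `D` is a dense subset of `S`: every element of `S` is the supremum of a rapidly
increasing sequence of elements of `D`. -/
def IsDenseSub {S : Type*} [AddCommMonoid S] [PartialOrder S] (D : Set S) : Prop :=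
  ∀ s : S, ∃ u : ℕ → S, (∀ n, u n ∈ D) ∧ (∀ n, CC (u n) (u (n + 1))) ∧ IsLUB (Set.range u) s

/-- `m` is the least upper bound of the functionals `l₁` and `l₂` in `F(S)`
(pointwise order). -/
def IsFSup {S : Type*} [AddCommMonoid S] [PartialOrder S] (l₁ l₂ m : S → ℝ≥0∞) : Prop :=
  IsFunctional m ∧ (∀ s, l₁ s ≤ m s) ∧ (∀ s, l₂ s ≤ m s) ∧
    ∀ d : S → ℝ≥0∞, IsFunctional d → (∀ s, l₁ s ≤ d s) → (∀ s, l₂ s ≤ d s) → ∀ s, m s ≤ d s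

/-- `m` is the greatest lower bound of the functionals `l₁` and `l₂` in `F(S)`
(pointwise order). -/
def IsFInf {S : Type*} [AddCommMonoid S] [PartialOrder S] (l₁ l₂ m : S → ℝ≥0∞) : Prop :=
  IsFunctional m ∧ (∀ s, m s ≤ l₁ s) ∧ (∀ s, m s ≤ l₂ s) ∧
    ∀ d : S → ℝ≥0∞, IsFunctional d → (∀ s, d s ≤ l₁ s) → (∀ s, d s ≤ l₂ s) → ∀ s, d s ≤ m s

/-- An isomorphism of ordered semigroups between `S` and the extended natural numbers. -/
def IsOrdSemigroupIso {S : Type*} [AddCommMonoid S] [PartialOrder S] (e : S ≃ ℕ∞) : Prop :=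
  (∀ a b : S, e (a + b) = e a + e b) ∧ e 0 = 0 ∧ ∀ a b : S, a ≤ b ↔ e a ≤ e b
/-!
The inequality `m + λ₃ ≤ m'` holds because `m + λ₃` is a functional below both `λ₁ + λ₃` and
`λ₂ + λ₃`. For the converse, subtract `λ₃` from `m'`. The pointwise difference `m' - λ₃` is not
a functional (it need not even be monotone where `λ₃ = ∞`), but its regularisation
`d v = ⨆_{p ≪ v} (m' p - λ₃ p)` is: O5 makes `m' - λ₃` monotone wherever `λ₃` is finite, and O6
splits a compact piece of `a + b` into pieces below `a` and `b`, which gives subadditivity.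
Since `m' ≤ λᵢ + λ₃`, the functional `d` lies below `λ₁` and `λ₂`, hence below `m`, while
`m' ≤ d + λ₃`.
-/

section

variable {S : Type*} [AddCommMonoid S] [PartialOrder S]

theorem CC.le {s t : S} (h : CC s t) : s ≤ t := by
  obtain ⟨n, hn⟩ := h (fun _ => t) monotone_const t
    (by rw [Set.range_const]; exact isLUB_singleton) le_rfl
  exact hn

theorem cc_of_le_of_cc {r s t : S} (hrs : r ≤ s) (h : CC s t) : CC r t :=
  fun u hu x hx htx => (h u hu x hx htx).imp fun _ hn => hrs.trans hn

theorem CC.trans_le {s t t' : S} (h : CC s t) (htt' : t ≤ t') : CC s t' :=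
  fun u hu x hx ht'x => h u hu x hx (htt'.trans ht'x)

namespace CuO5

theorem nonempty_cc (hS : CuO5 S) (t : S) : Nonempty {s // CC s t} :=
  ⟨⟨0, fun _ _ _ _ _ => ⟨0, hS.zeroLe _⟩⟩⟩

theorem add_le_add (hS : CuO5 S) {a b c d : S} (hab : a ≤ b) (hcd : c ≤ d) : a + c ≤ b + d :=
  calc a + c ≤ b + c := hS.addRightMono hab c
    _ = c + b := add_comm _ _
    _ ≤ d + b := hS.addRightMono hcd b
    _ = b + d := add_comm _ _

theorem le_add_left (hS : CuO5 S) (a b : S) : b ≤ a + b := by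
  simpa using hS.addRightMono (hS.zeroLe a) b

theorem le_add_right (hS : CuO5 S) (a b : S) : a ≤ a + b :=
  add_comm b a ▸ hS.le_add_left b a

theorem exists_cc_seq_isLUB (hS : CuO5 S) (s : S) :
    ∃ u : ℕ → S, Monotone u ∧ (∀ n, CC (u n) (u (n + 1))) ∧ (∀ n, CC (u n) s) ∧
      IsLUB (Set.range u) s := by
  obtain ⟨u, hu, hlub⟩ := hS.O2 s
  exact ⟨u, monotone_nat_of_le_succ fun n => (hu n).le, hu,
    fun n => (hu n).trans_le (hlub.1 ⟨n + 1, rfl⟩), hlub⟩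

theorem exists_cc_between (hS : CuO5 S) {s t : S} (h : CC s t) : ∃ c, CC s c ∧ CC c t := by
  obtain ⟨u, hmono, hu, hut, hlub⟩ := hS.exists_cc_seq_isLUB t
  obtain ⟨n, hn⟩ := h u hmono t hlub le_rfl
  exact ⟨u (n + 1), cc_of_le_of_cc hn (hu n), hut (n + 1)⟩

theorem exists_le_add_of_cc_add (hS : CuO5 S) {r a b : S} (h : CC r (a + b)) :
    ∃ a' b', CC a' a ∧ CC b' b ∧ r ≤ a' + b' := by
  obtain ⟨u, hu, -, hua, hulub⟩ := hS.exists_cc_seq_isLUB a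
  obtain ⟨v, hv, -, hvb, hvlub⟩ := hS.exists_cc_seq_isLUB b
  obtain ⟨n, hn⟩ := h _ (fun i j hij => hS.add_le_add (hu hij) (hv hij)) _
    (hS.O4 u v hu hv a b hulub hvlub) le_rfl
  exact ⟨u n, v n, hua n, hvb n, hn⟩

end CuO5

noncomputable def ccSup (g : S → ℝ≥0∞) (v : S) : ℝ≥0∞ :=
  ⨆ p : {x // CC x v}, g p

theorem le_ccSup (g : S → ℝ≥0∞) {p v : S} (h : CC p v) : g p ≤ ccSup g v :=
  le_iSup_of_le (⟨p, h⟩ : {x // CC x v}) le_rfl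

theorem ccSup_mono (g : S → ℝ≥0∞) : Monotone (ccSup g) :=
  fun _ _ hab => iSup_le fun p => le_ccSup g (p.2.trans_le hab)

theorem ccSup_le {g κ : S → ℝ≥0∞} (hκ : Monotone κ) (hg : ∀ s, g s ≤ κ s) (v : S) :
    ccSup g v ≤ κ v :=
  iSup_le fun p => (hg p).trans (hκ p.2.le)

theorem CuO5.ccSup_map_sup (hS : CuO5 S) (g : S → ℝ≥0∞) {u : ℕ → S} (hu : Monotone u) {x : S}
    (hx : IsLUB (Set.range u) x) : ccSup g x = ⨆ n, ccSup g (u n) := by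
  refine le_antisymm (iSup_le fun p => ?_) (iSup_le fun n => ccSup_mono g (hx.1 ⟨n, rfl⟩))
  obtain ⟨c, hpc, hcx⟩ := hS.exists_cc_between p.2
  obtain ⟨n, hn⟩ := hcx u hu x hx le_rfl
  exact le_iSup_of_le n (le_ccSup g (hpc.trans_le hn))

namespace IsFunctional

theorem monotone {l : S → ℝ≥0∞} (hl : IsFunctional l) : Monotone l :=
  fun _ _ => hl.mono

theorem ccSup_eq (hS : CuO5 S) {l : S → ℝ≥0∞} (hl : IsFunctional l) : ccSup l = l := by
  funext v
  refine le_antisymm (ccSup_le hl.monotone (fun _ => le_rfl) v) ?_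
  obtain ⟨u, hu, -, huv, hlub⟩ := hS.exists_cc_seq_isLUB v
  rw [hl.map_sup u hu v hlub]
  exact iSup_le fun n => le_ccSup l (huv n)

theorem add {l l' : S → ℝ≥0∞} (hl : IsFunctional l) (hl' : IsFunctional l') :
    IsFunctional (l + l') where
  map_zero := by simp [hl.map_zero, hl'.map_zero]
  map_add s t := by simp only [Pi.add_apply, hl.map_add, hl'.map_add]; ring
  mono hst := add_le_add (hl.mono hst) (hl'.mono hst)
  map_sup u hu x hx := by
    simp only [Pi.add_apply, hl.map_sup u hu x hx, hl'.map_sup u hu x hx]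
    exact ENNReal.iSup_add_iSup_of_monotone (fun _ _ h => hl.mono (hu h))
      (fun _ _ h => hl'.mono (hu h))

variable {μ ν : S → ℝ≥0∞}

theorem map_add_tsub_le (hS : CuO5 S) (hμ : IsFunctional μ) (hν : IsFunctional ν)
    (hνμ : ∀ s, ν s ≤ μ s) {u v : S} (huv : u ≤ v) : μ u + (ν v - ν u) ≤ μ v := by
  have := hS.nonempty_cc u
  rw [← congrFun (hμ.ccSup_eq hS) u, ccSup, ENNReal.iSup_add]
  refine iSup_le fun ⟨w, hw⟩ => ?_
  obtain ⟨c, hwc, hvc⟩ := hS.O5 hw huv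
  have hνc : ν v - ν u ≤ ν c := by
    rw [tsub_le_iff_left, ← hν.map_add]
    exact hν.mono hvc
  calc μ w + (ν v - ν u) ≤ μ w + μ c := add_le_add_right (hνc.trans (hνμ c)) _
    _ = μ (w + c) := (hμ.map_add w c).symm
    _ ≤ μ v := hμ.mono hwc

theorem tsub_le_tsub_of_ne_top (hS : CuO5 S) (hμ : IsFunctional μ) (hν : IsFunctional ν)
    (hνμ : ∀ s, ν s ≤ μ s) {u v : S} (huv : u ≤ v) (hv : ν v ≠ ⊤) :
    (μ - ν) u ≤ (μ - ν) v := by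
  refine ENNReal.le_sub_of_add_le_right hv ?_
  calc μ u - ν u + ν v = μ u + (ν v - ν u) := by
        conv_lhs => rw [← add_tsub_cancel_of_le (hν.mono huv), ← add_assoc,
          tsub_add_cancel_of_le (hνμ u)]
    _ ≤ μ v := map_add_tsub_le hS hμ hν hνμ huv

theorem map_tsub_add (hμ : IsFunctional μ) (hν : IsFunctional ν) (hνμ : ∀ s, ν s ≤ μ s)
    {p q : S} (hp : ν p ≠ ⊤) (hq : ν q ≠ ⊤) : (μ - ν) (p + q) = (μ - ν) p + (μ - ν) q := by
  simp only [Pi.sub_apply, hμ.map_add, hν.map_add]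
  exact ((ENNReal.cancel_of_ne hp).tsub_add_tsub_comm (ENNReal.cancel_of_ne hq)
    (hνμ p) (hνμ q)).symm

theorem ccSup_tsub_add_le (hS : CuO5 S) (hμ : IsFunctional μ) (hν : IsFunctional ν)
    (hνμ : ∀ s, ν s ≤ μ s) (a b : S) :
    ccSup (μ - ν) a + ccSup (μ - ν) b ≤ ccSup (μ - ν) (a + b) := by
  have := hS.nonempty_cc a
  have := hS.nonempty_cc b
  refine ENNReal.iSup_add_iSup_le fun ⟨p, hp⟩ ⟨q, hq⟩ => ?_
  rcases eq_or_ne (ν p) ⊤ with hp_top | hp_top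
  · simpa [hp_top] using le_ccSup (μ - ν) (hq.trans_le (hS.le_add_left a b))
  rcases eq_or_ne (ν q) ⊤ with hq_top | hq_top
  · simpa [hq_top] using le_ccSup (μ - ν) (hp.trans_le (hS.le_add_right a b))
  rw [← map_tsub_add hμ hν hνμ hp_top hq_top]
  exact le_ccSup (μ - ν) (hS.O3 hp hq)

theorem ccSup_tsub_le_add (hS : CuO6 S) (hμ : IsFunctional μ) (hν : IsFunctional ν)
    (hνμ : ∀ s, ν s ≤ μ s) (a b : S) :
    ccSup (μ - ν) (a + b) ≤ ccSup (μ - ν) a + ccSup (μ - ν) b := by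
  refine iSup_le fun ⟨r, hr⟩ => ?_
  rcases eq_or_ne (ν r) ⊤ with hr_top | hr_top
  · simp [hr_top]
  obtain ⟨a', b', ha', hb', hr'⟩ := hS.exists_le_add_of_cc_add hr
  show μ r - ν r ≤ _
  rw [tsub_le_iff_right, ← congrFun (hμ.ccSup_eq hS.toCuO5) r]
  refine iSup_le fun ⟨w, hw⟩ => tsub_le_iff_right.1 ?_
  obtain ⟨x, y, hwxy, hxa, hxr, hyb, hyr⟩ := hS.O6 hr' hw
  have hx : ν x ≠ ⊤ := ne_top_of_le_ne_top hr_top (hν.mono hxr)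
  have hy : ν y ≠ ⊤ := ne_top_of_le_ne_top hr_top (hν.mono hyr)
  have hxy : ν (x + y) ≠ ⊤ := by rw [hν.map_add]; exact ENNReal.add_ne_top.2 ⟨hx, hy⟩
  calc μ w - ν r ≤ (μ - ν) w := tsub_le_tsub_left (hν.mono hw.le) _
    _ ≤ (μ - ν) (x + y) := tsub_le_tsub_of_ne_top hS.toCuO5 hμ hν hνμ hwxy hxy
    _ = (μ - ν) x + (μ - ν) y := map_tsub_add hμ hν hνμ hx hy
    _ ≤ ccSup (μ - ν) a + ccSup (μ - ν) b :=
      add_le_add (le_ccSup _ (cc_of_le_of_cc hxa ha')) (le_ccSup _ (cc_of_le_of_cc hyb hb'))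

theorem ccSup_tsub (hS : CuO6 S) (hμ : IsFunctional μ) (hν : IsFunctional ν)
    (hνμ : ∀ s, ν s ≤ μ s) : IsFunctional (ccSup (μ - ν)) where
  map_zero := le_antisymm
    ((ccSup_le hμ.monotone (fun _ => tsub_le_self) 0).trans_eq hμ.map_zero) zero_le
  map_add a b := le_antisymm (ccSup_tsub_le_add hS hμ hν hνμ a b)
    (ccSup_tsub_add_le hS.toCuO5 hμ hν hνμ a b)
  mono hab := ccSup_mono _ hab
  map_sup _ hu _ hx := hS.ccSup_map_sup _ hu hx

theorem le_ccSup_tsub_add (hS : CuO5 S) (hμ : IsFunctional μ) (hν : Monotone ν) (v : S) :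
    μ v ≤ ccSup (μ - ν) v + ν v := by
  rw [← congrFun (hμ.ccSup_eq hS) v]
  exact iSup_le fun p => le_tsub_add.trans (add_le_add (le_ccSup (μ - ν) p.2) (hν p.2.le))

end IsFunctional

end

/-- `(λ₁ ∧ λ₂) + λ₃ = (λ₁ + λ₃) ∧ (λ₂ + λ₃)` in F(S). -/
theorem inf_add_distrib {S : Type*} [AddCommMonoid S] [PartialOrder S]
    (hS : CuO6 S) (l₁ l₂ l₃ : S → ℝ≥0∞)
    (h₁ : IsFunctional l₁) (h₂ : IsFunctional l₂) (h₃ : IsFunctional l₃)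
    (m m' : S → ℝ≥0∞) (hm : IsFInf l₁ l₂ m)
    (hm' : IsFInf (fun s => l₁ s + l₃ s) (fun s => l₂ s + l₃ s) m') :
    ∀ s : S, m s + l₃ s = m' s := by
  obtain ⟨hmF, hm₁, hm₂, hm_max⟩ := hm
  obtain ⟨hm'F, hm'₁, hm'₂, hm'_max⟩ := hm'
  have hl₃m' : ∀ s, l₃ s ≤ m' s := hm'_max l₃ h₃ (fun _ => le_add_self) (fun _ => le_add_self)
  have hd_le_m : ∀ s, ccSup (m' - l₃) s ≤ m s :=
    hm_max _ (hm'F.ccSup_tsub hS h₃ hl₃m')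
      (ccSup_le h₁.monotone fun s => tsub_le_iff_right.2 (hm'₁ s))
      (ccSup_le h₂.monotone fun s => tsub_le_iff_right.2 (hm'₂ s))
  intro s
  refine le_antisymm (hm'_max (m + l₃) (hmF.add h₃) (fun s => add_le_add_left (hm₁ s) _)
    (fun s => add_le_add_left (hm₂ s) _) s) ?_
  calc m' s ≤ ccSup (m' - l₃) s + l₃ s := hm'F.le_ccSup_tsub_add hS.toCuO5 h₃.monotone s
    _ ≤ m s + l₃ s := add_le_add_left (hd_le_m s) _
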